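/- arXiv:1611.03663 — 9 statements merged into one kernel-verified Lean document; each statement's English description precedes it below -/
import Mathlib

section
/- Let X be a real normed space, T : X → X a bounded linear operator of norm 1, and x a unit vector with ‖Tx‖ = ‖T‖ = 1. If both x and Tx are smooth points of X (i.e., each has a unique norming functional in the dual unit sphere), then for any y ∈ X, x ⊥_B y implies Tx ⊥_B Ty. -/
def BJOrth {X : Type*} [NormedAddCommGroup X] [NormedSpace ℝ X] (x y : X) : Prop :=
  ∀ lam : ℝ, ‖x + lam • y‖ ≥ ‖x‖

/-!
Birkhoff–James orthogonality `x ⊥_B y` means that `x` has norm `‖x‖` in `X ⧸ ℝ ∙ y`, so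
Hahn–Banach on that quotient gives a norming functional `f` of `x` with `f y = 0`. If `g` norms
`T x`, then `g ∘ T` also norms `x`; smoothness of `x` forces `g ∘ T = f`, hence `g (T y) = 0`,
and a norming functional of `T x` vanishing on `T y` witnesses `T x ⊥_B T y`.
-/

section

variable {X : Type*} [NormedAddCommGroup X] [NormedSpace ℝ X]

lemma norm_eq_one_of_norm_le_one_of_apply_eq_norm {f : StrongDual ℝ X} {x : X}
    (hf : ‖f‖ ≤ 1) (hfx : f x = ‖x‖) (hx : x ≠ 0) : ‖f‖ = 1 := by
  refine le_antisymm hf (le_of_mul_le_mul_right ?_ (norm_pos_iff.2 hx))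
  calc 1 * ‖x‖ = ‖f x‖ := by rw [hfx, one_mul, Real.norm_eq_abs, abs_norm]
    _ ≤ ‖f‖ * ‖x‖ := f.le_opNorm x

lemma bjOrth_of_dual_apply_eq_zero {f : StrongDual ℝ X} {x y : X}
    (hf : ‖f‖ ≤ 1) (hfx : f x = ‖x‖) (hfy : f y = 0) : BJOrth x y := fun c =>
  calc ‖x‖ = f (x + c • y) := by simp [hfx, hfy]
    _ ≤ ‖f (x + c • y)‖ := le_abs_self _
    _ ≤ 1 * ‖x + c • y‖ := f.le_of_opNorm_le hf _
    _ = ‖x + c • y‖ := one_mul _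

lemma BJOrth.norm_mk_eq {x y : X} (h : BJOrth x y) :
    ‖(Submodule.Quotient.mk x : X ⧸ ℝ ∙ y)‖ = ‖x‖ := by
  refine le_antisymm (Submodule.Quotient.norm_mk_le _ x) (le_of_forall_pos_le_add fun ε hε => ?_)
  obtain ⟨m, hm, hlt⟩ := Submodule.Quotient.norm_mk_lt (Submodule.Quotient.mk x : X ⧸ ℝ ∙ y) hε
  obtain ⟨c, hc⟩ := Submodule.mem_span_singleton.1 ((Submodule.Quotient.eq _).1 hm)
  calc ‖x‖ ≤ ‖x + c • y‖ := h c
    _ = ‖m‖ := by rw [hc, add_sub_cancel]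
    _ ≤ _ := hlt.le

lemma BJOrth.exists_dual_apply_eq_zero {x y : X} (hx : x ≠ 0) (h : BJOrth x y) :
    ∃ f : StrongDual ℝ X, ‖f‖ = 1 ∧ f x = ‖x‖ ∧ f y = 0 := by
  obtain ⟨φ, hφ, hφx⟩ := exists_dual_vector'' ℝ (Submodule.Quotient.mk x : X ⧸ ℝ ∙ y)
  set f := φ.comp (ℝ ∙ y).mkQL
  have hfx : f x = ‖x‖ := by simpa [f, h.norm_mk_eq] using hφx
  have hf : ‖f‖ ≤ 1 := f.opNorm_le_bound zero_le_one fun z =>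
    calc ‖f z‖ ≤ 1 * ‖(Submodule.Quotient.mk z : X ⧸ ℝ ∙ y)‖ := φ.le_of_opNorm_le hφ _
      _ ≤ 1 * ‖z‖ := by gcongr; exact Submodule.Quotient.norm_mk_le _ z
  refine ⟨f, norm_eq_one_of_norm_le_one_of_apply_eq_norm hf hfx hx, hfx, ?_⟩
  simp [f, (Submodule.Quotient.mk_eq_zero _).2 (Submodule.mem_span_singleton_self y)]

end

theorem smooth_points_orth_preserved_general {X : Type*} [NormedAddCommGroup X] [NormedSpace ℝ X]
    (T : X →L[ℝ] X) (x : X) (hT : ‖T‖ = 1) (hx : ‖x‖ = 1) (hTx : ‖T x‖ = 1)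
    (hxs : ∃! f : X →L[ℝ] ℝ, ‖f‖ = 1 ∧ f x = ‖x‖)
    (y : X) (hxy : BJOrth x y) : BJOrth (T x) (T y) := by
  have hx0 : x ≠ 0 := norm_ne_zero_iff.1 (by rw [hx]; exact one_ne_zero)
  obtain ⟨f, hf, hfx, hfy⟩ := hxy.exists_dual_apply_eq_zero hx0
  obtain ⟨g, hg, hgTx⟩ := exists_dual_vector ℝ (T x) (by rw [hTx]; exact one_ne_zero)
  have hgTx' : g.comp T x = ‖x‖ := by simp [hgTx, hTx, hx]
  have hgT : ‖g.comp T‖ ≤ 1 := (g.opNorm_comp_le T).trans (by rw [hg, hT, one_mul])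
  have hgT_eq : g.comp T = f :=
    hxs.unique ⟨norm_eq_one_of_norm_le_one_of_apply_eq_norm hgT hgTx' hx0, hgTx'⟩ ⟨hf, hfx⟩
  refine bjOrth_of_dual_apply_eq_zero hg.le hgTx ?_
  rw [← ContinuousLinearMap.comp_apply, hgT_eq, hfy]

theorem smooth_points_orth_preserved {X : Type*} [NormedAddCommGroup X] [NormedSpace ℝ X]
    (T : X →L[ℝ] X) (x : X) (hT : ‖T‖ = 1) (hx : ‖x‖ = 1) (hTx : ‖T x‖ = 1)
    (hxs : ∃! f : X →L[ℝ] ℝ, ‖f‖ = 1 ∧ f x = ‖x‖)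
    (hTxs : ∃! g : X →L[ℝ] ℝ, ‖g‖ = 1 ∧ g (T x) = ‖T x‖)
    (y : X) (hxy : BJOrth x y) : BJOrth (T x) (T y) :=
  smooth_points_orth_preserved_general T x hT hx hTx hxs y hxy
end

section
/- On (ℝ³, ‖·‖₂), let T be the diagonal operator with diagonal entries (1, 1/2, 1/2) and A the diagonal operator with diagonal entries (0, 1, 0). Then T ⊥_B A but A is not Birkhoff-James orthogonal to T. -/
/-! `‖T‖ = 1` is attained at `e₀`, which `A` kills, so `(T + λA) e₀ = T e₀` and no `T + λA` has
smaller norm. Conversely `‖A‖ = 1`, while `A - T/2 = diag(-1/2, 3/4, -1/4)` has norm `3/4`. -/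

def OpBJOrth {X : Type*} [NormedAddCommGroup X] [NormedSpace ℝ X]
    (T A : X →L[ℝ] X) : Prop :=
  ∀ lam : ℝ, ‖T + lam • A‖ ≥ ‖T‖

theorem EuclideanSpace.norm_le_of_forall_norm_apply_le {𝕜 ι : Type*} [RCLike 𝕜] [Fintype ι]
    {v w : EuclideanSpace 𝕜 ι} {c : ℝ} (hc : 0 ≤ c) (h : ∀ i, ‖w i‖ ≤ c * ‖v i‖) :
    ‖w‖ ≤ c * ‖v‖ := by
  rw [← sq_le_sq₀ (norm_nonneg _) (by positivity), mul_pow, EuclideanSpace.norm_sq_eq,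
    EuclideanSpace.norm_sq_eq, Finset.mul_sum]
  gcongr with i
  simpa [mul_pow] using pow_le_pow_left₀ (norm_nonneg _) (h i) 2

theorem ContinuousLinearMap.opNorm_le_of_forall_norm_apply_le {𝕜 ι : Type*} [RCLike 𝕜]
    [Fintype ι] {T : EuclideanSpace 𝕜 ι →L[𝕜] EuclideanSpace 𝕜 ι} {c : ℝ} (hc : 0 ≤ c)
    (h : ∀ v i, ‖T v i‖ ≤ c * ‖v i‖) : ‖T‖ ≤ c :=
  T.opNorm_le_bound hc fun v => EuclideanSpace.norm_le_of_forall_norm_apply_le hc (h v)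

theorem opBJOrth_of_apply_eq_zero {X : Type*} [NormedAddCommGroup X] [NormedSpace ℝ X]
    {T A : X →L[ℝ] X} {x : X} (hx : ‖x‖ ≤ 1) (hTx : ‖T‖ ≤ ‖T x‖) (hAx : A x = 0) :
    OpBJOrth T A := fun lam =>
  calc ‖T‖ ≤ ‖T x‖ := hTx
    _ = ‖(T + lam • A) x‖ := by simp [hAx]
    _ ≤ ‖T + lam • A‖ := (T + lam • A).unit_le_opNorm x hx

theorem diag_example_not_symmetric
    (T A : EuclideanSpace ℝ (Fin 3) →L[ℝ] EuclideanSpace ℝ (Fin 3))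
    (hT : ∀ v : EuclideanSpace ℝ (Fin 3),
      T v 0 = v 0 ∧ T v 1 = (1/2) * v 1 ∧ T v 2 = (1/2) * v 2)
    (hA : ∀ v : EuclideanSpace ℝ (Fin 3),
      A v 0 = 0 ∧ A v 1 = v 1 ∧ A v 2 = 0) :
    OpBJOrth T A ∧ ¬ OpBJOrth A T := by
  set e₀ := EuclideanSpace.single (0 : Fin 3) (1 : ℝ)
  set e₁ := EuclideanSpace.single (1 : Fin 3) (1 : ℝ)
  have hTe₀ : T e₀ = e₀ := by ext i; fin_cases i <;> simp [hT, e₀]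
  have hAe₀ : A e₀ = 0 := by ext i; fin_cases i <;> simp [hA, e₀]
  have hAe₁ : A e₁ = e₁ := by ext i; fin_cases i <;> simp [hA, e₁]
  have hT_le : ‖T‖ ≤ 1 := T.opNorm_le_of_forall_norm_apply_le zero_le_one fun v i => by
    fin_cases i <;> simp [hT v] <;> linarith [abs_nonneg (v 1), abs_nonneg (v 2)]
  have hAT_le : ‖A + (-(1/2) : ℝ) • T‖ ≤ 3/4 :=
    ContinuousLinearMap.opNorm_le_of_forall_norm_apply_le (by norm_num) fun v i => by
      fin_cases i <;> simp [hT v, hA v]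
      · linarith [abs_nonneg (v 0)]
      · rw [show v 1 + -(2⁻¹ * (2⁻¹ * v 1)) = 3 / 4 * v 1 by ring, abs_mul]; norm_num
      · linarith [abs_nonneg (v 2)]
  have hA_ge : 1 ≤ ‖A‖ := by simpa [hAe₁, e₁] using A.unit_le_opNorm e₁ (by simp [e₁])
  refine ⟨opBJOrth_of_apply_eq_zero (by simp [e₀]) (by simpa [hTe₀, e₀]) hAe₀, fun h => ?_⟩
  linarith [h (-(1/2))]
end

section
/- Let X be a finite-dimensional strictly convex and smooth real Banach space of dimension n ≥ 2. A bounded linear operator T : X → X is left symmetric (T ⊥_B A implies A ⊥_B T for all A ∈ B(X)) if and only if T is the zero operator. -/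
/-!
Let `T ≠ 0`, let `x` be a unit vector with `‖T x‖ = ‖T‖` and `g` a norming functional of `T x`;
then `T ⊥_B A` whenever `g (A x) = 0`. In the other direction, by compactness, `A ⊥_B B` yields
a norming point `z` of `A` and a norming functional `f` of `A z` with `f (B z) ≤ 0`.

If `T` is left symmetric, testing it against the rank-one operators `η ⊗ T p` with `η x = 0`,
`η p = 1` shows, by strict convexity, that `T p = 0`; hence `T = φ ⊗ T x` has rank one. Testing
against `φ ⊗ u` with `g u = 0`, smoothness at `u` gives `u ⊥_B T x`. Finally, with `ψ x = 0`,
`ψ q = 1`, the operator `A = φ ⊗ u + ψ ⊗ (u + r • T x)` satisfies `T ⊥_B A`, and `A ⊥_B T`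
would force `‖A‖ ≤ 1 + r ‖T‖`, while strict convexity gives `‖A‖ ≥ 2 / ‖x + q‖ > 1`:
a contradiction for small `r > 0`.
-/

open Metric

theorem Submodule.span_singleton_ne_top {K V : Type*} [DivisionRing K] [AddCommGroup V]
    [Module K V] (hV : 2 ≤ Module.finrank K V) (x : V) : span K {x} ≠ ⊤ := fun h => by
  have := finrank_span_le_card (R := K) ({x} : Set V)
  rw [h, finrank_top] at this
  simp at this
  omega

section NormedSpace

variable {E F : Type*} [NormedAddCommGroup E] [NormedSpace ℝ E] [NormedAddCommGroup F]
  [NormedSpace ℝ F]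

namespace ContinuousLinearMap

theorem norm_apply_le_one {f : E →L[ℝ] F} {z : E} (hf : ‖f‖ ≤ 1) (hz : ‖z‖ ≤ 1) :
    ‖f z‖ ≤ 1 :=
  (f.le_opNorm z).trans (mul_le_one₀ hf (norm_nonneg z) hz)

theorem apply_le_norm {f : E →L[ℝ] ℝ} (hf : ‖f‖ ≤ 1) (y : E) : f y ≤ ‖y‖ :=
  (le_abs_self _).trans <| (f.le_opNorm y).trans (mul_le_of_le_one_left (norm_nonneg y) hf)

theorem exists_norm_le_one_norm_apply_eq_opNorm [FiniteDimensional ℝ E] (S : E →L[ℝ] F) :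
    ∃ z : E, ‖z‖ ≤ 1 ∧ ‖S z‖ = ‖S‖ := by
  obtain ⟨z, hz, hmax⟩ := (isCompact_closedBall (0 : E) 1).exists_isMaxOn
    (nonempty_closedBall.2 zero_le_one) S.continuous.norm.continuousOn
  rw [mem_closedBall_zero_iff] at hz
  refine ⟨z, hz, le_antisymm (by simpa using S.le_opNorm_of_le hz)
    (le_of_forall_lt fun r hr => ?_)⟩
  obtain ⟨y, hy, hry⟩ := S.exists_lt_apply_of_lt_opNorm hr
  exact hry.trans_le (hmax (mem_closedBall_zero_iff.2 hy.le))

theorem eq_smulRight_of_sup_span_eq_top {T : E →L[ℝ] F} {x : E}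
    (h : LinearMap.ker (T : E →ₗ[ℝ] F) ⊔ Submodule.span ℝ {x} = ⊤) {f : F →L[ℝ] ℝ}
    (hf : f (T x) = 1) : T = (f.comp T).smulRight (T x) := by
  ext z
  obtain ⟨k, hk, _, hc, rfl⟩ := Submodule.mem_sup.1 (h ▸ Submodule.mem_top : z ∈ _)
  obtain ⟨c, rfl⟩ := Submodule.mem_span_singleton.1 hc
  have hTk : T k = 0 := hk
  simp [hTk, hf]

end ContinuousLinearMap

theorem Submodule.exists_apply_eq_one_of_ne_top [FiniteDimensional ℝ E] {U : Submodule ℝ E}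
    (hU : U ≠ ⊤) :
    ∃ (η : E →L[ℝ] ℝ) (p : E), ‖η‖ ≤ 1 ∧ ‖p‖ ≤ 1 ∧ η p = 1 ∧ ∀ w ∈ U, η w = 0 := by
  obtain ⟨f, hf0, hUf⟩ := U.exists_le_ker_of_lt_top hU.lt_top
  set F := LinearMap.toContinuousLinearMap f
  obtain ⟨p, hp, hFp⟩ := F.exists_norm_le_one_norm_apply_eq_opNorm
  have hFp0 : F p ≠ 0 := by
    rw [← norm_ne_zero_iff, hFp, norm_ne_zero_iff]
    exact fun h => hf0 (by simpa [F] using congrArg ContinuousLinearMap.toLinearMap h)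
  refine ⟨(F p)⁻¹ • F, p, ?_, hp, inv_mul_cancel₀ hFp0, fun w hw => ?_⟩
  · rw [norm_smul, norm_inv, hFp, inv_mul_cancel₀ (hFp ▸ norm_ne_zero_iff.2 hFp0)]
  · simp [F, LinearMap.mem_ker.1 (hUf hw)]

theorem ContinuousLinearMap.exists_norm_eq_one_apply_eq_zero [FiniteDimensional ℝ E]
    (g : E →L[ℝ] ℝ) (hE : 2 ≤ Module.finrank ℝ E) : ∃ u : E, ‖u‖ = 1 ∧ g u = 0 := by
  have : LinearMap.ker (g : E →ₗ[ℝ] ℝ) ≠ ⊥ :=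
    LinearMap.ker_ne_bot_of_finrank_lt (by rw [Module.finrank_self]; omega)
  obtain ⟨u, hu, hu0⟩ := Submodule.exists_mem_ne_zero_of_ne_bot this
  have hgu : g u = 0 := hu
  exact ⟨‖u‖⁻¹ • u, norm_smul_inv_norm hu0, by simp [hgu]⟩

variable [StrictConvexSpace ℝ E]

theorem eq_of_apply_eq_one {f : E →L[ℝ] ℝ} {y z : E} (hf : ‖f‖ ≤ 1) (hy : ‖y‖ ≤ 1)
    (hz : ‖z‖ ≤ 1) (hfy : f y = 1) (hfz : f z = 1) : y = z := by
  have hy1 : ‖y‖ = 1 := le_antisymm hy (hfy ▸ f.apply_le_norm hf y)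
  have hz1 : ‖z‖ = 1 := le_antisymm hz (hfz ▸ f.apply_le_norm hf z)
  refine eq_of_norm_eq_of_norm_add_eq (hy1.trans hz1.symm) (le_antisymm (norm_add_le y z) ?_)
  calc ‖y‖ + ‖z‖ = f (y + z) := by rw [map_add, hfy, hfz, hy1, hz1]
    _ ≤ ‖y + z‖ := f.apply_le_norm hf _

theorem one_lt_norm_add_smul {f : E →L[ℝ] ℝ} {u v : E} (hf : ‖f‖ ≤ 1) (hu : ‖u‖ ≤ 1)
    (hfu : f u = 1) (hfv : f v = 0) (hv : v ≠ 0) {t : ℝ} (ht : t ≠ 0) : 1 < ‖u + t • v‖ := by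
  have hfuv : f (u + t • v) = 1 := by simp [hfu, hfv]
  refine (hfuv ▸ f.apply_le_norm hf _).lt_of_ne fun h => smul_ne_zero ht hv ?_
  simpa using eq_of_apply_eq_one hf h.symm.le hu hfuv hfu

theorem abs_lt_norm_smul_add_smul {f : E →L[ℝ] ℝ} {u v : E} (hf : ‖f‖ ≤ 1) (hu : ‖u‖ ≤ 1)
    (hfu : f u = 1) (hfv : f v = 0) (hv : v ≠ 0) (s : ℝ) {t : ℝ} (ht : t ≠ 0) :
    |s| < ‖s • u + t • v‖ := by
  rcases eq_or_ne s 0 with rfl | hs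
  · simpa using smul_ne_zero ht hv
  · have : s • u + t • v = s • (u + (t / s) • v) := by
      rw [smul_add, smul_smul, mul_div_cancel₀ t hs]
    rw [this, norm_smul, Real.norm_eq_abs]
    exact lt_mul_of_one_lt_right (abs_pos.2 hs)
      (one_lt_norm_add_smul hf hu hfu hfv hv (div_ne_zero ht hs))

end NormedSpace

section OpBJOrth

variable {X : Type*} [NormedAddCommGroup X] [NormedSpace ℝ X]

theorem OpBJOrth.neg_right {A B : X →L[ℝ] X} (h : OpBJOrth A B) : OpBJOrth A (-B) :=
  fun lam => by simpa only [smul_neg, neg_smul] using h (-lam)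

theorem opBJOrth_of_apply_eq_zero_s5 {T A : X →L[ℝ] X} {x : X} {g : X →L[ℝ] ℝ} (hx : ‖x‖ ≤ 1)
    (hg : ‖g‖ ≤ 1) (hgT : g (T x) = ‖T‖) (hgA : g (A x) = 0) : OpBJOrth T A := fun lam =>
  calc ‖T‖ = g ((T + lam • A) x) := by simp [hgT, hgA]
    _ ≤ ‖(T + lam • A) x‖ := g.apply_le_norm hg _
    _ ≤ ‖T + lam • A‖ := by simpa using (T + lam • A).le_opNorm_of_le hx

theorem OpBJOrth.exists_apply_eq_opNorm_apply_nonpos [FiniteDimensional ℝ X]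
    {A B : X →L[ℝ] X} (h : OpBJOrth A B) :
    ∃ (z : X) (f : X →L[ℝ] ℝ), ‖z‖ ≤ 1 ∧ ‖f‖ ≤ 1 ∧ f (A z) = ‖A‖ ∧ f (B z) ≤ 0 := by
  set K : Set (X × (X →L[ℝ] ℝ)) :=
    closedBall 0 1 ×ˢ closedBall 0 1 ∩ {p | p.2 (B p.1) ≤ 0}
  have hK : IsCompact K :=
    ((isCompact_closedBall _ _).prod (isCompact_closedBall _ _)).inter_right
      (isClosed_le (by fun_prop) continuous_const)
  -- a norming point of `A - ε • B` and a norming functional of its image lie in `K` and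
  -- almost norm `A`; a maximiser of `f (A z)` over `K` then norms `A` exactly
  have happrox : ∀ ε > 0, ∃ p ∈ K, ‖A‖ - ε * ‖B‖ ≤ p.2 (A p.1) := by
    intro ε hε
    obtain ⟨z, hz, hz'⟩ := (A + (-ε) • B).exists_norm_le_one_norm_apply_eq_opNorm
    obtain ⟨f, hf, hfz⟩ := exists_dual_vector'' ℝ ((A + (-ε) • B) z)
    have hsum : ‖A‖ ≤ f (A z) - ε * f (B z) :=
      calc ‖A‖ ≤ ‖(A + (-ε) • B) z‖ := hz' ▸ h (-ε)
        _ = f ((A + (-ε) • B) z) := by exact_mod_cast hfz.symm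
        _ = f (A z) - ε * f (B z) := by simp [sub_eq_add_neg]
    have hfA : f (A z) ≤ ‖A‖ :=
      (f.apply_le_norm hf _).trans (by simpa using A.le_opNorm_of_le hz)
    have hfB : -f (B z) ≤ ‖B‖ := by
      simpa using (f.apply_le_norm hf (-B z)).trans (by simpa using B.le_opNorm_of_le hz)
    refine ⟨(z, f), ⟨⟨mem_closedBall_zero_iff.2 hz, mem_closedBall_zero_iff.2 hf⟩, ?_⟩, ?_⟩
    · show f (B z) ≤ 0
      nlinarith
    · nlinarith
  obtain ⟨p, hpK, hmax⟩ := hK.exists_isMaxOn ⟨_, (happrox 1 one_pos).choose_spec.1⟩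
    (show Continuous fun p : X × (X →L[ℝ] ℝ) => p.2 (A p.1) by fun_prop).continuousOn
  obtain ⟨⟨hp1, hp2⟩, hpB⟩ := hpK
  rw [mem_closedBall_zero_iff] at hp1 hp2
  refine ⟨p.1, p.2, hp1, hp2, le_antisymm ((p.2.apply_le_norm hp2 _).trans
    (by simpa using A.le_opNorm_of_le hp1)) ?_, hpB⟩
  have hlim : Filter.Tendsto (fun ε : ℝ => ‖A‖ - ε * ‖B‖) (nhdsWithin 0 (Set.Ioi 0))
      (nhds ‖A‖) :=
    tendsto_nhdsWithin_of_tendsto_nhds (Continuous.tendsto' (by fun_prop) 0 ‖A‖ (by simp))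
  refine le_of_tendsto hlim (eventually_nhdsWithin_of_forall fun ε hε => ?_)
  obtain ⟨q, hqK, hq⟩ := happrox ε hε
  exact hq.trans (hmax hqK)

def IsLeftSymmetric (T : X →L[ℝ] X) : Prop :=
  ∀ A : X →L[ℝ] X, OpBJOrth T A → OpBJOrth A T

end OpBJOrth

section StrictConvex

variable {X : Type*} [NormedAddCommGroup X] [NormedSpace ℝ X] [StrictConvexSpace ℝ X]
  [FiniteDimensional ℝ X]

theorem OpBJOrth.exists_apply_eq_norm_of_smulRight {η : X →L[ℝ] ℝ} {p w : X}
    {B : X →L[ℝ] X} (hη : ‖η‖ ≤ 1) (hp : ‖p‖ ≤ 1) (hηp : η p = 1) (hw : w ≠ 0)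
    (h : OpBJOrth (η.smulRight w) B) :
    ∃ f : X →L[ℝ] ℝ, ‖f‖ = 1 ∧ f w = ‖w‖ ∧ f (B p) ≤ 0 := by
  have hA : ‖w‖ ≤ ‖η.smulRight w‖ := by
    simpa [hηp] using (η.smulRight w).le_opNorm_of_le hp
  have hw0 : 0 < ‖w‖ := norm_pos_iff.2 hw
  -- the norming points of `η.smulRight w` are `p` and `-p`, so it suffices to treat `η z ≥ 0`
  suffices key : ∀ (z : X) (f : X →L[ℝ] ℝ), ‖z‖ ≤ 1 → ‖f‖ ≤ 1 → ‖w‖ ≤ η z * f w →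
      f (B z) ≤ 0 → 0 ≤ η z → ∃ f : X →L[ℝ] ℝ, ‖f‖ = 1 ∧ f w = ‖w‖ ∧ f (B p) ≤ 0 by
    obtain ⟨z, f, hz, hf, hfA, hfB⟩ := h.exists_apply_eq_opNorm_apply_nonpos
    have hzf : ‖w‖ ≤ η z * f w := by simpa [← hfA] using hA
    rcases le_total 0 (η z) with hηz | hηz
    · exact key z f hz hf hzf hfB hηz
    · exact key (-z) (-f) (by simpa) (by simpa) (by simpa) (by simpa) (by simpa)
  intro z f hz hf hzf hfB hηz
  have hηz1 : η z ≤ 1 := (le_abs_self _).trans (η.norm_apply_le_one hη hz)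
  have hfw : f w ≤ ‖w‖ := f.apply_le_norm hf w
  have hfw' : f w = ‖w‖ := le_antisymm hfw <| by
    rcases le_or_gt (f w) 0 with hfw0 | hfw0 <;> nlinarith
  obtain rfl : z = p := eq_of_apply_eq_one hη hz hp (by nlinarith) hηp
  refine ⟨f, le_antisymm hf ?_, hfw', hfB⟩
  have := f.le_opNorm w
  rw [hfw', norm_norm] at this
  exact (le_mul_iff_one_le_left hw0).1 this

theorem OpBJOrth.apply_eq_zero_of_smulRight {η f : X →L[ℝ] ℝ} {p w : X} {B : X →L[ℝ] X}
    (hη : ‖η‖ ≤ 1) (hp : ‖p‖ ≤ 1) (hηp : η p = 1) (hw : w ≠ 0)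
    (hsmooth : ∃! f : X →L[ℝ] ℝ, ‖f‖ = 1 ∧ f w = ‖w‖) (hf : ‖f‖ = 1) (hfw : f w = ‖w‖)
    (h : OpBJOrth (η.smulRight w) B) : f (B p) = 0 := by
  obtain ⟨f₁, hf₁, hf₁w, hf₁B⟩ := h.exists_apply_eq_norm_of_smulRight hη hp hηp hw
  obtain ⟨f₂, hf₂, hf₂w, hf₂B⟩ := h.neg_right.exists_apply_eq_norm_of_smulRight hη hp hηp hw
  obtain rfl := hsmooth.unique ⟨hf, hfw⟩ ⟨hf₁, hf₁w⟩
  obtain rfl := hsmooth.unique ⟨hf, hfw⟩ ⟨hf₂, hf₂w⟩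
  simp only [neg_apply, map_neg, neg_nonpos] at hf₂B
  exact le_antisymm hf₁B hf₂B

theorem opNorm_smulRight_add_smulRight_le_of_opBJOrth {φ ψ f : X →L[ℝ] ℝ} {u v : X} {r : ℝ}
    (hφ : ‖φ‖ ≤ 1) (hψ : ‖ψ‖ ≤ 1) (hf : ‖f‖ ≤ 1) (hu : ‖u‖ ≤ 1) (hfu : f u = 1) (hfv : f v = 0)
    (hv : v ≠ 0) (hr : 0 < r)
    (h : OpBJOrth (φ.smulRight u + ψ.smulRight (u + r • v)) (φ.smulRight v)) :
    ‖φ.smulRight u + ψ.smulRight (u + r • v)‖ ≤ 1 + r * ‖v‖ := by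
  set A := φ.smulRight u + ψ.smulRight (u + r • v)
  have hA : ∀ z, A z = (φ z + ψ z) • u + (r * ψ z) • v := fun z => by
    simp only [A, add_apply, ContinuousLinearMap.smulRight_apply, smul_add,
      add_smul, smul_smul, mul_comm r]
    abel
  suffices key : ∀ (z : X) (g : X →L[ℝ] ℝ), ‖z‖ ≤ 1 → ‖g‖ ≤ 1 → g (A z) = ‖A‖ →
      φ z * g v ≤ 0 → 0 ≤ ψ z → ‖A‖ ≤ 1 + r * ‖v‖ by
    obtain ⟨z, g, hz, hg, hgA, hgT⟩ := h.exists_apply_eq_opNorm_apply_nonpos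
    have hgT : φ z * g v ≤ 0 := by simpa using hgT
    rcases le_total 0 (ψ z) with hψz | hψz
    · exact key z g hz hg hgA hgT hψz
    · exact key (-z) (-g) (by simpa) (by simpa) (by simpa) (by simpa) (by simpa)
  intro z g hz hg hgA hgT hψz
  have hgAz : g (A z) = (φ z + ψ z) * g u + (r * ψ z) * g v := by simp [hA]
  have hφz := abs_le.1 (φ.norm_apply_le_one hφ hz)
  have hψz1 := (le_abs_self _).trans (ψ.norm_apply_le_one hψ hz)
  have hgv : g v ≤ ‖v‖ := g.apply_le_norm hg v
  have hgu : (φ z + ψ z) * g u ≤ |φ z + ψ z| := (le_abs_self _).trans <| by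
    rw [abs_mul]; exact mul_le_of_le_one_right (abs_nonneg _) (g.norm_apply_le_one hg hu)
  -- a norming functional of `A z` is positive on `v` as soon as `A z` has a `v`-component
  have hφz' : φ z ≤ 0 ∨ ψ z = 0 := by
    refine hψz.eq_or_lt.elim (fun h0 => Or.inr h0.symm) fun hpos => Or.inl ?_
    have hlt := abs_lt_norm_smul_add_smul hf hu hfu hfv hv (φ z + ψ z)
      (by positivity : r * ψ z ≠ 0)
    have hnorm : ‖A z‖ = g (A z) :=
      le_antisymm (by simpa [hgA] using A.le_opNorm_of_le hz) (g.apply_le_norm hg _)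
    rw [← hA, hnorm, hgAz] at hlt
    have hgv0 : 0 < g v := pos_of_mul_pos_right (by linarith) (by positivity : 0 ≤ r * ψ z)
    nlinarith
  have habs : |φ z + ψ z| ≤ 1 := by
    rcases hφz' with hφz' | hψz0
    · exact abs_le.2 ⟨by linarith, by linarith⟩
    · simpa [hψz0] using φ.norm_apply_le_one hφ hz
  calc ‖A‖ = (φ z + ψ z) * g u + r * ψ z * g v := hgA ▸ hgAz
    _ ≤ 1 + r * ‖v‖ := by
      gcongr ?_ + ?_
      · exact hgu.trans habs
      · nlinarith [mul_le_mul_of_nonneg_left hgv (mul_nonneg hr.le hψz),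
          mul_nonneg (mul_nonneg hr.le (norm_nonneg v)) (sub_nonneg.2 hψz1)]

theorem exists_not_opBJOrth_smulRight {φ ψ f : X →L[ℝ] ℝ} {x q u v : X} (hφ : ‖φ‖ ≤ 1)
    (hψ : ‖ψ‖ ≤ 1) (hf : ‖f‖ ≤ 1) (hx : ‖x‖ ≤ 1) (hq : ‖q‖ ≤ 1) (hu : ‖u‖ ≤ 1)
    (hφx : φ x = 1) (hφq : φ q = 0) (hψx : ψ x = 0) (hψq : ψ q = 1) (hfu : f u = 1)
    (hfv : f v = 0) (hv : v ≠ 0) :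
    ∃ A : X →L[ℝ] X, A x = u ∧ ¬OpBJOrth A (φ.smulRight v) := by
  have hxq : ‖x + q‖ < 2 := by
    have := norm_combo_lt_of_ne hx hq (by rintro rfl; simp [hφx] at hφq)
      (by norm_num : (0 : ℝ) < 1 / 2) (by norm_num : (0 : ℝ) < 1 / 2) (by norm_num)
    rw [← smul_add, norm_smul] at this
    norm_num at this
    linarith
  have hv0 : 0 < ‖v‖ := norm_pos_iff.2 hv
  obtain ⟨r, hr, hrv⟩ : ∃ r : ℝ, 0 < r ∧ r * ‖v‖ = (2 - ‖x + q‖) / 4 :=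
    ⟨(2 - ‖x + q‖) / (4 * ‖v‖), by positivity, by field_simp⟩
  set A := φ.smulRight u + ψ.smulRight (u + r • v)
  refine ⟨A, by simp [A, hφx, hψx], fun h => ?_⟩
  have hupper := opNorm_smulRight_add_smulRight_le_of_opBJOrth hφ hψ hf hu hfu hfv hv hr h
  -- `A` maps `x + q` to `2 • u + r • v`, on which `f` takes the value `2`
  have hlower : 2 ≤ ‖A‖ * ‖x + q‖ :=
    calc (2 : ℝ) = f (A (x + q)) := by simp [A, hφx, hφq, hψx, hψq, hfu, hfv]; norm_num
      _ ≤ ‖A (x + q)‖ := f.apply_le_norm hf _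
      _ ≤ ‖A‖ * ‖x + q‖ := A.le_opNorm _
  -- `2 ≤ ‖A‖ ‖x + q‖ ≤ (1 + r ‖v‖) ‖x + q‖ < 2` by the choice of `r`
  nlinarith [norm_nonneg (x + q)]

theorem IsLeftSymmetric.apply_eq_zero {T : X →L[ℝ] X} (hT : IsLeftSymmetric T) {x : X}
    {g : X →L[ℝ] ℝ} (hx : ‖x‖ ≤ 1) (hg : ‖g‖ ≤ 1) (hgT : g (T x) = ‖T‖) {η : X →L[ℝ] ℝ} {p : X}
    (hη : ‖η‖ ≤ 1) (hp : ‖p‖ ≤ 1) (hηx : η x = 0) (hηp : η p = 1) : T p = 0 := by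
  by_contra hTp
  have hTA : OpBJOrth T (η.smulRight (T p)) :=
    opBJOrth_of_apply_eq_zero_s5 hx hg hgT (by simp [hηx])
  obtain ⟨f, -, hfw, hfT⟩ := (hT _ hTA).exists_apply_eq_norm_of_smulRight hη hp hηp hTp
  exact hTp (norm_le_zero_iff.1 (hfw ▸ hfT))

theorem IsLeftSymmetric.exists_eq_smulRight {T : X →L[ℝ] X} (hT : IsLeftSymmetric T)
    (hT0 : T ≠ 0) {x : X} {g : X →L[ℝ] ℝ} (hx : ‖x‖ ≤ 1) (hg : ‖g‖ ≤ 1) (hgT : g (T x) = ‖T‖) :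
    ∃ φ : X →L[ℝ] ℝ, ‖φ‖ ≤ 1 ∧ φ x = 1 ∧ T = φ.smulRight (T x) := by
  have hspan : LinearMap.ker (T : X →ₗ[ℝ] X) ⊔ Submodule.span ℝ {x} = ⊤ := by
    by_contra hne
    obtain ⟨η, p, hη, hp, hηp, hηU⟩ := Submodule.exists_apply_eq_one_of_ne_top hne
    have hTp := hT.apply_eq_zero hx hg hgT hη hp
      (hηU x (Submodule.mem_sup_right (Submodule.mem_span_singleton_self x))) hηp
    exact one_ne_zero (hηp ▸ hηU p (Submodule.mem_sup_left hTp))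
  have hT0' : ‖T‖ ≠ 0 := norm_ne_zero_iff.2 hT0
  refine ⟨(‖T‖⁻¹ • g).comp T, ?_, by simp [hgT, hT0'],
    ContinuousLinearMap.eq_smulRight_of_sup_span_eq_top hspan (by simp [hgT, hT0'])⟩
  calc ‖(‖T‖⁻¹ • g).comp T‖ ≤ ‖T‖⁻¹ * ‖g‖ * ‖T‖ := by
        simpa [norm_smul] using ContinuousLinearMap.opNorm_comp_le (‖T‖⁻¹ • g) T
    _ ≤ ‖T‖⁻¹ * 1 * ‖T‖ := by gcongr
    _ = 1 := by field_simp

end StrictConvex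

theorem left_symmetric_iff_zero {X : Type*} [NormedAddCommGroup X]
    [NormedSpace ℝ X] [StrictConvexSpace ℝ X] [FiniteDimensional ℝ X]
    (hdim : 2 ≤ Module.finrank ℝ X)
    (hsmooth : ∀ x : X, x ≠ 0 → ∃! f : X →L[ℝ] ℝ, ‖f‖ = 1 ∧ f x = ‖x‖)
    (T : X →L[ℝ] X) :
    (∀ A : X →L[ℝ] X, OpBJOrth T A → OpBJOrth A T) ↔ T = 0 := by
  refine ⟨fun hT => ?_, fun hT A _ lam => by simp [hT]⟩
  change IsLeftSymmetric T at hT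
  by_contra hT0
  obtain ⟨x, hx, hTx⟩ := T.exists_norm_le_one_norm_apply_eq_opNorm
  obtain ⟨g, hg, hgx⟩ := exists_dual_vector'' ℝ (T x)
  have hgT : g (T x) = ‖T‖ := by exact_mod_cast hgx.trans (congrArg _ hTx)
  have hv : T x ≠ 0 := fun h => hT0 (norm_eq_zero.1 (by simpa [h] using hgT.symm))
  obtain ⟨φ, hφ, hφx, hTφ⟩ := hT.exists_eq_smulRight hT0 hx hg hgT
  obtain ⟨ψ, q, hψ, hq, hψq, hψx⟩ :=
    Submodule.exists_apply_eq_one_of_ne_top (Submodule.span_singleton_ne_top hdim x)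
  replace hψx := hψx x (Submodule.mem_span_singleton_self x)
  have hφq : φ q = 0 := by
    have hTq := hT.apply_eq_zero hx hg hgT hψ hq hψx hψq
    rw [hTφ, ContinuousLinearMap.smulRight_apply, smul_eq_zero] at hTq
    exact hTq.resolve_right hv
  obtain ⟨u, hu, hgu⟩ := g.exists_norm_eq_one_apply_eq_zero hdim
  have hu0 : u ≠ 0 := norm_ne_zero_iff.1 (hu ▸ one_ne_zero)
  obtain ⟨f, ⟨hf, hfu⟩, -⟩ := hsmooth u hu0
  -- smoothness at `u` forces `u ⊥_B T x`
  have hfv : f (T x) = 0 :=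
    (hT _ (opBJOrth_of_apply_eq_zero_s5 hx hg hgT (by simp [hφx, hgu]))).apply_eq_zero_of_smulRight
      hφ hx hφx hu0 (hsmooth u hu0) hf hfu
  obtain ⟨A, hAx, hAT⟩ := exists_not_opBJOrth_smulRight hφ hψ hf.le hx hq hu.le hφx hφq hψx hψq
    (by rw [hfu, hu]) hfv hv
  rw [← hTφ] at hAT
  exact hAT (hT A (opBJOrth_of_apply_eq_zero_s5 hx hg hgT (by rw [hAx, hgu])))
end

section
/- Let X be an n-dimensional real Banach space, x₀ a unit vector that is a left symmetric point of X, and T ∈ B(X) such that the set of unit vectors where T attains its norm is exactly {±x₀} and x₀ is an eigenvector of T. Then either rank T ≥ n − 1, or T is not a right symmetric point of B(X). -/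
lemma exists_norm_attain {X : Type*} [NormedAddCommGroup X]
    [NormedSpace ℝ X] [FiniteDimensional ℝ X]
    (S : X →L[ℝ] X) (x₀ : X) (hx₀ : ‖x₀‖ = 1) :
    ∃ x : X, ‖x‖ = 1 ∧ ‖S‖ ≤ ‖S x‖ := by
  have hne : (Metric.sphere (0:X) 1).Nonempty := ⟨x₀, by simp [hx₀]⟩
  obtain ⟨x, hxs, hmax⟩ := (isCompact_sphere (0:X) 1).exists_isMaxOn hne
    ((S.continuous.norm).continuousOn)
  have hx1 : ‖x‖ = 1 := by simpa using hxs
  refine ⟨x, hx1, ?_⟩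
  refine S.opNorm_le_bound (norm_nonneg _) (fun y => ?_)
  rcases eq_or_ne y 0 with rfl | hy
  · simp
  · have hyn : ‖y‖ ≠ 0 := norm_ne_zero_iff.mpr hy
    have hmem : (‖y‖⁻¹ • y) ∈ Metric.sphere (0:X) 1 := by
      simp [norm_smul, abs_of_nonneg (norm_nonneg y), inv_mul_cancel₀ hyn]
    have := hmax hmem
    simp only [Set.mem_setOf_eq] at this
    have hSy : ‖S (‖y‖⁻¹ • y)‖ = ‖y‖⁻¹ * ‖S y‖ := by
      rw [map_smul, norm_smul, norm_inv, norm_norm]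
    rw [hSy] at this
    calc ‖S y‖ = ‖y‖ * (‖y‖⁻¹ * ‖S y‖) := by
          field_simp
      _ ≤ ‖y‖ * ‖S x‖ := by
          apply mul_le_mul_of_nonneg_left this (norm_nonneg y)
      _ = ‖S x‖ * ‖y‖ := mul_comm _ _

lemma lemC {X : Type*} [NormedAddCommGroup X] [NormedSpace ℝ X]
    [FiniteDimensional ℝ X]
    (T A : X →L[ℝ] X) (x₀ : X) (hx₀ : ‖x₀‖ = 1)
    (hMT : {x : X | ‖x‖ = 1 ∧ ‖T x‖ = ‖T‖} = {x₀, -x₀})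
    (hTA : ∀ lam : ℝ, ‖T + lam • A‖ ≥ ‖T‖) :
    ∀ lam : ℝ, ‖T x₀ + lam • A x₀‖ ≥ ‖T‖ := by
  intro lam
  by_contra hcon
  push_neg at hcon
  set C := ‖T‖ with hC
  -- choose norm attaining points for T + (t n * lam) • A, t n = 1/(n+1)
  have hpick : ∀ n : ℕ, ∃ x : X, ‖x‖ = 1 ∧
      ‖T + ((1/((n:ℝ)+1)) * lam) • A‖ ≤ ‖(T + ((1/((n:ℝ)+1)) * lam) • A) x‖ :=
    fun n => exists_norm_attain _ x₀ hx₀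
  choose x hx1 hx2 using hpick
  have ht_pos : ∀ n : ℕ, (0:ℝ) < 1/((n:ℝ)+1) := by
    intro n; positivity
  have ht_le : ∀ n : ℕ, (1:ℝ)/((n:ℝ)+1) ≤ 1 := by
    intro n
    rw [div_le_one (by positivity)]
    simp
  -- basic: ‖(T + c•A) y‖ = ‖T y + c • A y‖
  have happ : ∀ (c : ℝ) (y : X), (T + c • A) y = T y + c • A y := by
    intro c y; simp
  have hSn : ∀ n : ℕ, C ≤ ‖T (x n) + ((1/((n:ℝ)+1)) * lam) • A (x n)‖ := by
    intro n
    have := hx2 n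
    rw [happ] at this
    exact le_trans (hTA _) this
  have hTxle : ∀ n : ℕ, ‖T (x n)‖ ≤ C := by
    intro n
    calc ‖T (x n)‖ ≤ C * ‖x n‖ := T.le_opNorm _
      _ = C := by rw [hx1 n, mul_one]
  -- Fact 1 : ‖T x n + lam • A (x n)‖ ≥ C  (convexity)
  have fact1 : ∀ n : ℕ, C ≤ ‖T (x n) + lam • A (x n)‖ := by
    intro n
    set t : ℝ := 1/((n:ℝ)+1) with htdef
    set u : X := T (x n) with hu
    set v : X := lam • A (x n) with hv
    have htv : u + (t * lam) • A (x n) = u + t • v := by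
      rw [hv, smul_smul]
    have h1 : C ≤ ‖u + t • v‖ := by rw [← htv]; exact hSn n
    have hcomb : u + t • v = (1 - t) • u + t • (u + v) := by
      rw [smul_add, sub_smul, one_smul]; abel
    have h2 : ‖u + t • v‖ ≤ (1 - t) • ‖u‖ + t • ‖u + v‖ := by
      rw [hcomb] at *
      calc ‖(1-t) • u + t • (u+v)‖ ≤ ‖(1-t) • u‖ + ‖t • (u+v)‖ := norm_add_le _ _
        _ = (1-t) • ‖u‖ + t • ‖u+v‖ := by
            rw [norm_smul, norm_smul, Real.norm_eq_abs, Real.norm_eq_abs,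
              abs_of_nonneg (by linarith [ht_le n] : (0:ℝ) ≤ 1 - t),
              abs_of_pos (ht_pos n)]
            rfl
    have hule : ‖u‖ ≤ ‖u + t • v‖ := le_trans (hTxle n) h1
    have : ‖u + t • v‖ ≤ (1 - t) * ‖u + t • v‖ + t * ‖u + v‖ := by
      have : (1-t) • ‖u‖ ≤ (1-t) • ‖u + t • v‖ := by
        apply smul_le_smul_of_nonneg_left hule (by linarith [ht_le n])
      calc ‖u + t • v‖ ≤ (1 - t) • ‖u‖ + t • ‖u + v‖ := h2
        _ ≤ (1-t) • ‖u + t•v‖ + t • ‖u+v‖ := by linarith [this]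
        _ = (1 - t) * ‖u + t • v‖ + t * ‖u + v‖ := rfl
    have ht := ht_pos n
    nlinarith [h1]
  -- Fact 2 : ‖T x n‖ ≥ C - t n * (|lam| * ‖A‖)
  have fact2 : ∀ n : ℕ, C - (1/((n:ℝ)+1)) * (|lam| * ‖A‖) ≤ ‖T (x n)‖ := by
    intro n
    set t : ℝ := 1/((n:ℝ)+1) with htdef
    have h1 : C ≤ ‖T (x n) + (t * lam) • A (x n)‖ := hSn n
    have h2 : ‖T (x n) + (t * lam) • A (x n)‖ ≤ ‖T (x n)‖ + ‖(t*lam) • A (x n)‖ :=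
      norm_add_le _ _
    have h3 : ‖(t*lam) • A (x n)‖ ≤ t * (|lam| * ‖A‖) := by
      rw [norm_smul, Real.norm_eq_abs, abs_mul, abs_of_pos (ht_pos n)]
      have : ‖A (x n)‖ ≤ ‖A‖ := by
        calc ‖A (x n)‖ ≤ ‖A‖ * ‖x n‖ := A.le_opNorm _
          _ = ‖A‖ := by rw [hx1 n, mul_one]
      have h4 : |lam| * ‖A (x n)‖ ≤ |lam| * ‖A‖ :=
        mul_le_mul_of_nonneg_left this (abs_nonneg _)
      calc t * |lam| * ‖A (x n)‖ = t * (|lam| * ‖A (x n)‖) := by ring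
        _ ≤ t * (|lam| * ‖A‖) := mul_le_mul_of_nonneg_left h4 (le_of_lt (ht_pos n))
    linarith
  -- extract convergent subsequence
  have hmem : ∀ n : ℕ, x n ∈ Metric.sphere (0:X) 1 := by
    intro n; simp [hx1 n]
  obtain ⟨xs, hxs, φ, hφ, htend⟩ :=
    (isCompact_sphere (0:X) 1).tendsto_subseq hmem
  have hxs1 : ‖xs‖ = 1 := by simpa using hxs
  -- limit of T x and T x + lam A x
  have hcont1 : Continuous (fun y : X => ‖T y + lam • A y‖) :=
    (T.continuous.add (A.continuous.const_smul lam)).norm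
  have hcont2 : Continuous (fun y : X => ‖T y‖) := T.continuous.norm
  have hlim1 : Filter.Tendsto (fun k => ‖T (x (φ k)) + lam • A (x (φ k))‖)
      Filter.atTop (nhds ‖T xs + lam • A xs‖) :=
    (hcont1.tendsto xs).comp htend
  have hlim2 : Filter.Tendsto (fun k => ‖T (x (φ k))‖)
      Filter.atTop (nhds ‖T xs‖) :=
    (hcont2.tendsto xs).comp htend
  have hb1 : C ≤ ‖T xs + lam • A xs‖ :=
    ge_of_tendsto hlim1 (Filter.Eventually.of_forall (fun k => fact1 (φ k)))
  -- tendsto of lower bound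
  have htzero : Filter.Tendsto (fun k : ℕ => (1:ℝ)/((φ k : ℝ)+1))
      Filter.atTop (nhds 0) := by
    have h0 : Filter.Tendsto (fun n : ℕ => (1:ℝ)/((n:ℝ)+1))
        Filter.atTop (nhds 0) := tendsto_one_div_add_atTop_nhds_zero_nat
    exact h0.comp hφ.tendsto_atTop
  have hblim : Filter.Tendsto
      (fun k : ℕ => C - (1/((φ k : ℝ)+1)) * (|lam| * ‖A‖))
      Filter.atTop (nhds C) := by
    have := Filter.Tendsto.const_sub C ((htzero.mul_const (|lam| * ‖A‖)))
    simpa using this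
  have hb2 : C ≤ ‖T xs‖ :=
    le_of_tendsto_of_tendsto' hblim hlim2 (fun k => fact2 (φ k))
  have hTxs : ‖T xs‖ = ‖T‖ := le_antisymm
    (by calc ‖T xs‖ ≤ ‖T‖ * ‖xs‖ := T.le_opNorm _
          _ = ‖T‖ := by rw [hxs1, mul_one]) hb2
  have hxsM : xs ∈ ({x₀, -x₀} : Set X) := by
    rw [← hMT]; exact ⟨hxs1, hTxs⟩
  rcases hxsM with h | h
  · rw [h] at hb1; linarith
  · rw [Set.mem_singleton_iff] at h
    rw [h] at hb1
    rw [map_neg, map_neg, smul_neg, ← neg_add, norm_neg] at hb1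
    linarith

theorem rank_or_not_right_symmetric {X : Type*} [NormedAddCommGroup X]
    [NormedSpace ℝ X] [FiniteDimensional ℝ X] {n : ℕ}
    (hdim : Module.finrank ℝ X = n)
    (x₀ : X) (hx₀ : ‖x₀‖ = 1)
    (hls : ∀ y : X, BJOrth x₀ y → BJOrth y x₀)
    (T : X →L[ℝ] X)
    (hMT : {x : X | ‖x‖ = 1 ∧ ‖T x‖ = ‖T‖} = {x₀, -x₀})
    (heig : ∃ μ : ℝ, T x₀ = μ • x₀) :
    n - 1 ≤ Module.finrank ℝ (LinearMap.range (T : X →ₗ[ℝ] X)) ∨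
      ¬ (∀ A : X →L[ℝ] X, OpBJOrth A T → OpBJOrth T A) := by
  by_cases hrank : n - 1 ≤ Module.finrank ℝ (LinearMap.range (T : X →ₗ[ℝ] X))
  · exact Or.inl hrank
  right
  intro hrs
  push_neg at hrank
  set r := Module.finrank ℝ (LinearMap.range (T : X →ₗ[ℝ] X)) with hrdef
  have hn2 : 2 ≤ n := by omega
  haveI : Nontrivial X := nontrivial_of_ne x₀ 0 (by
    intro h; rw [h] at hx₀; simp at hx₀)
  -- rank-nullity
  have hrn : r + Module.finrank ℝ (LinearMap.ker (T : X →ₗ[ℝ] X)) =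
      Module.finrank ℝ X := LinearMap.finrank_range_add_finrank_ker _
  have hker_pos : Module.finrank ℝ (LinearMap.ker (T : X →ₗ[ℝ] X)) ≠ 0 := by
    intro h0
    rw [h0] at hrn
    omega
  have hker_ne : LinearMap.ker (T : X →ₗ[ℝ] X) ≠ ⊥ := by
    intro hbot
    apply hker_pos
    rw [hbot]
    simp
  obtain ⟨w, hwker, hw0⟩ := Submodule.ne_bot_iff _ |>.mp hker_ne
  have hTw : T w = 0 := hwker
  set w' : X := ‖w‖⁻¹ • w with hw'
  have hwn : ‖w‖ ≠ 0 := norm_ne_zero_iff.mpr hw0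
  have hw'1 : ‖w'‖ = 1 := by
    rw [hw', norm_smul, norm_inv, norm_norm, inv_mul_cancel₀ hwn]
  have hTw' : T w' = 0 := by rw [hw', map_smul, hTw, smul_zero]
  -- x₀ attains the norm
  have hx₀M : ‖T x₀‖ = ‖T‖ := by
    have : x₀ ∈ ({x₀, -x₀} : Set X) := Set.mem_insert _ _
    rw [← hMT] at this
    exact this.2
  obtain ⟨μ, hμ⟩ := heig
  have hTnorm : ‖T‖ = |μ| := by
    rw [← hx₀M, hμ, norm_smul, Real.norm_eq_abs, hx₀, mul_one]
  have hμ0 : μ ≠ 0 := by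
    intro h0
    have hT0 : ‖T‖ = 0 := by rw [hTnorm, h0, abs_zero]
    -- T has operator norm 0, so every unit vector is in M_T
    obtain ⟨y, hy⟩ : ∃ y : X, y ∉ Submodule.span ℝ ({x₀} : Set X) := by
      by_contra hall
      push_neg at hall
      have hsp : Submodule.span ℝ ({x₀} : Set X) = ⊤ := by
        apply Submodule.eq_top_iff'.mpr hall
      have hfr := finrank_span_singleton (K := ℝ) (show x₀ ≠ (0:X) from fun h => by
        rw [h] at hx₀; simp at hx₀)
      rw [hsp] at hfr
      rw [finrank_top ℝ X] at hfr
      omega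
    have hy0 : y ≠ 0 := fun h => hy (h ▸ Submodule.zero_mem _)
    have hyn : ‖y‖ ≠ 0 := norm_ne_zero_iff.mpr hy0
    set u : X := ‖y‖⁻¹ • y with hu
    have hu1 : ‖u‖ = 1 := by
      rw [hu, norm_smul, norm_inv, norm_norm, inv_mul_cancel₀ hyn]
    have huM : u ∈ ({x₀, -x₀} : Set X) := by
      rw [← hMT]
      constructor
      · exact hu1
      · have : ‖T u‖ ≤ ‖T‖ * ‖u‖ := T.le_opNorm u
        rw [hT0, hu1] at this
        have h2 : ‖T u‖ = 0 := le_antisymm (by linarith) (norm_nonneg _)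
        rw [h2, hT0]
    apply hy
    rcases huM with h | h
    · have : y = ‖y‖ • x₀ := by
        rw [← h, hu, smul_smul, mul_inv_cancel₀ hyn, one_smul]
      rw [this]
      exact Submodule.smul_mem _ _ (Submodule.mem_span_singleton_self _)
    · rw [Set.mem_singleton_iff] at h
      have : y = (-‖y‖) • x₀ := by
        have : u = -x₀ := h
        rw [neg_smul, ← smul_neg, ← this, hu, smul_smul, mul_inv_cancel₀ hyn,
          one_smul]
      rw [this]
      exact Submodule.smul_mem _ _ (Submodule.mem_span_singleton_self _)
  -- I ⊥_B T
  have hIT : OpBJOrth (1 : X →L[ℝ] X) T := by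
    intro lam
    have hid : ‖(1 : X →L[ℝ] X)‖ = 1 := ContinuousLinearMap.norm_id
    rw [hid]
    have happ : ((1 : X →L[ℝ] X) + lam • T) w' = w' := by
      simp [hTw']
    calc (1:ℝ) = ‖w'‖ := hw'1.symm
      _ = ‖((1 : X →L[ℝ] X) + lam • T) w'‖ := by rw [happ]
      _ ≤ ‖(1 : X →L[ℝ] X) + lam • T‖ * ‖w'‖ := ContinuousLinearMap.le_opNorm _ _
      _ = ‖(1 : X →L[ℝ] X) + lam • T‖ := by rw [hw'1, mul_one]
  have hTI : OpBJOrth T (1 : X →L[ℝ] X) := hrs _ hIT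
  have hkey := lemC T (1 : X →L[ℝ] X) x₀ hx₀ hMT hTI (-μ)
  have : ((1 : X →L[ℝ] X) : X → X) x₀ = x₀ := rfl
  rw [this, hμ] at hkey
  have hz : μ • x₀ + (-μ) • x₀ = 0 := by
    rw [← add_smul]; simp
  rw [hz, norm_zero, hTnorm] at hkey
  have : |μ| > 0 := abs_pos.mpr hμ0
  linarith
end

section
/- Let X be an n-dimensional real Banach space and T ∈ B(X) with M_T = {±x₀} for some unit vector x₀, and suppose ker T contains a nonzero left symmetric point of X. Then either (I ⊥_B T and T ⊥_B I), where I is the identity operator, or T is not a right symmetric point of B(X). -/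
/-!
Since `T` kills a unit vector `v`, `‖(I + λT) v‖ = 1 = ‖I‖`, so `I ⊥_B T` always holds. If
`T x₀ ⊥_B x₀`, then `T ⊥_B I` is witnessed at `x₀`. Otherwise `T ⊥_B I` fails, so `T` is not
right symmetric: in finite dimension `T ⊥_B A` yields, for each `λ`, some `z ∈ M_T` with
`‖T z + λ A z‖ ≥ ‖T‖`, and `M_T = {±x₀}` forces `z = ±x₀`. To find `z`, note that by convexity of
the norm a unit vector at which `T + tλA` (`0 < t < 1`) attains its norm satisfies
`‖T x + λ A x‖ ≥ ‖T‖` and `‖T x‖ ≥ ‖T‖ - t‖λA‖`; a maximiser of `‖T x‖` over the compact set of unit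
vectors with `‖T x + λ A x‖ ≥ ‖T‖` then lies in `M_T`.
-/

open Filter Topology Set

def normAttainingSet {E F : Type*} [NormedAddCommGroup E] [NormedSpace ℝ E]
    [NormedAddCommGroup F] [NormedSpace ℝ F] (S : E →L[ℝ] F) : Set E :=
  {x | ‖x‖ = 1 ∧ ‖S x‖ = ‖S‖}

theorem normAttainingSet_nonempty {E F : Type*} [NormedAddCommGroup E] [NormedSpace ℝ E]
    [FiniteDimensional ℝ E] [Nontrivial E] [NormedAddCommGroup F] [NormedSpace ℝ F]
    (S : E →L[ℝ] F) : (normAttainingSet S).Nonempty := by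
  obtain ⟨x, hx, hmax⟩ := (isCompact_sphere (0 : E) 1).exists_isMaxOn
    (NormedSpace.sphere_nonempty.2 zero_le_one) S.continuous.norm.continuousOn
  rw [mem_sphere_zero_iff_norm] at hx
  refine ⟨x, hx, le_antisymm (S.unit_le_opNorm x hx.le) ?_⟩
  exact S.opNorm_le_of_unit_norm (norm_nonneg _) fun y hy => hmax (by simpa using hy)

section

variable {X : Type*} [NormedAddCommGroup X] [NormedSpace ℝ X]

theorem opBJOrth_of_bjOrth_apply {T A : X →L[ℝ] X} {x : X} (hx : x ∈ normAttainingSet T)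
    (h : BJOrth (T x) (A x)) : OpBJOrth T A := fun lam =>
  calc ‖T‖ = ‖T x‖ := hx.2.symm
    _ ≤ ‖T x + lam • A x‖ := h lam
    _ = ‖(T + lam • A) x‖ := rfl
    _ ≤ ‖T + lam • A‖ := (T + lam • A).unit_le_opNorm x hx.1.le

theorem opBJOrth_id_of_apply_eq_zero {T : X →L[ℝ] X} {u : X} (hu : u ≠ 0) (hTu : T u = 0) :
    OpBJOrth (ContinuousLinearMap.id ℝ X) T := by
  have : Nontrivial X := nontrivial_of_ne u 0 hu
  refine opBJOrth_of_bjOrth_apply (x := ‖u‖⁻¹ • u) ⟨?_, ?_⟩ fun lam => ?_ <;>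
    simp [norm_smul, hu, hTu]

theorem exists_norm_le_norm_add_smul_of_opBJOrth [FiniteDimensional ℝ X] [Nontrivial X]
    {T A : X →L[ℝ] X} (hTA : OpBJOrth T A) (lam : ℝ) {t : ℝ} (ht : t ∈ Ioo (0 : ℝ) 1) :
    ∃ x, ‖x‖ = 1 ∧ ‖T‖ ≤ ‖T x + lam • A x‖ ∧ ‖T‖ ≤ ‖T x‖ + t * ‖lam • A‖ := by
  obtain ⟨x, hx, hmax⟩ := normAttainingSet_nonempty (T + (t * lam) • A)
  have hTx : ‖T x‖ ≤ ‖T‖ := T.unit_le_opNorm x hx.le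
  have hAx : ‖lam • A x‖ ≤ ‖lam • A‖ := (lam • A).unit_le_opNorm x hx.le
  have hperturb : ‖T‖ ≤ ‖T x + t • lam • A x‖ := by
    have := hTA (t * lam)
    rw [← hmax] at this
    simpa [mul_smul] using this
  have ht' : 0 ≤ 1 - t := sub_nonneg.2 ht.2.le
  refine ⟨x, hx, ?_, ?_⟩
  · have hconvex : ‖T‖ ≤ (1 - t) * ‖T‖ + t * ‖T x + lam • A x‖ :=
      calc ‖T‖ ≤ ‖T x + t • lam • A x‖ := hperturb
        _ = ‖(1 - t) • T x + t • (T x + lam • A x)‖ := by congr 1; module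
        _ ≤ (1 - t) * ‖T x‖ + t * ‖T x + lam • A x‖ := (norm_add_le _ _).trans_eq (by
          rw [norm_smul, norm_smul, Real.norm_of_nonneg ht', Real.norm_of_nonneg ht.1.le])
        _ ≤ (1 - t) * ‖T‖ + t * ‖T x + lam • A x‖ := by gcongr
    nlinarith [ht.1]
  · calc ‖T‖ ≤ ‖T x + t • lam • A x‖ := hperturb
      _ ≤ ‖T x‖ + t * ‖lam • A x‖ := by
        simpa [norm_smul, abs_of_pos ht.1] using norm_add_le (T x) (t • lam • A x)
      _ ≤ ‖T x‖ + t * ‖lam • A‖ := by gcongr; exact ht.1.le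

theorem exists_mem_normAttainingSet_norm_le_norm_add_smul [FiniteDimensional ℝ X]
    [Nontrivial X] {T A : X →L[ℝ] X} (hTA : OpBJOrth T A) (lam : ℝ) :
    ∃ z ∈ normAttainingSet T, ‖T‖ ≤ ‖T z + lam • A z‖ := by
  set K := {x ∈ Metric.sphere (0 : X) 1 | ‖T‖ ≤ ‖T x + lam • A x‖}
  have hK : IsCompact K := (isCompact_sphere 0 1).inter_right
    (isClosed_le continuous_const (T.continuous.add (A.continuous.const_smul lam)).norm)
  have approx : ∀ t ∈ Ioo (0 : ℝ) 1, ∃ x ∈ K, ‖T‖ - t * ‖lam • A‖ ≤ ‖T x‖ := fun t ht => by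
    obtain ⟨x, hx, hxK, hTx⟩ := exists_norm_le_norm_add_smul_of_opBJOrth hTA lam ht
    exact ⟨x, ⟨by simpa using hx, hxK⟩, by linarith⟩
  obtain ⟨y, hyK, -⟩ := approx 2⁻¹ ⟨by norm_num, by norm_num⟩
  obtain ⟨z, hzK, hzmax⟩ := hK.exists_isMaxOn ⟨y, hyK⟩ T.continuous.norm.continuousOn
  have hz1 : ‖z‖ = 1 := by simpa using hzK.1
  have hTz : ‖T‖ ≤ ‖T z‖ := by
    have hlim : Tendsto (fun t : ℝ => ‖T‖ - t * ‖lam • A‖) (𝓝[>] 0) (𝓝 ‖T‖) := by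
      have hcont : Continuous fun t : ℝ => ‖T‖ - t * ‖lam • A‖ := by fun_prop
      simpa using (hcont.tendsto 0).mono_left nhdsWithin_le_nhds
    refine le_of_tendsto hlim (eventually_of_mem (Ioo_mem_nhdsGT one_pos) fun t ht => ?_)
    obtain ⟨x, hxK, hx⟩ := approx t ht
    exact hx.trans (hzmax hxK)
  exact ⟨z, ⟨hz1, le_antisymm (T.unit_le_opNorm z hz1.le) hTz⟩, hzK.2⟩

theorem bjOrth_apply_of_opBJOrth [FiniteDimensional ℝ X] {T A : X →L[ℝ] X} {x₀ : X}
    (hM : normAttainingSet T = {x₀, -x₀}) (hTA : OpBJOrth T A) : BJOrth (T x₀) (A x₀) := by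
  obtain ⟨hx₀, hTx₀⟩ : x₀ ∈ normAttainingSet T := hM ▸ mem_insert _ _
  have : Nontrivial X := nontrivial_of_ne x₀ 0 (by rintro rfl; simp at hx₀)
  intro lam
  obtain ⟨z, hz, hTz⟩ := exists_mem_normAttainingSet_norm_le_norm_add_smul hTA lam
  rw [hM] at hz
  rcases hz with rfl | rfl
  · exact hTx₀ ▸ hTz
  · rwa [map_neg, map_neg, smul_neg, ← neg_add, norm_neg, ← hTx₀] at hTz

end

theorem identity_orth_or_not_right_symmetric_general {X : Type*} [NormedAddCommGroup X]
    [NormedSpace ℝ X] [FiniteDimensional ℝ X]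
    (T : X →L[ℝ] X) (x₀ : X)
    (hMT : {x : X | ‖x‖ = 1 ∧ ‖T x‖ = ‖T‖} = {x₀, -x₀})
    (hker : ∃ u : X, u ≠ 0 ∧ T u = 0 ∧ (∀ y : X, BJOrth u y → BJOrth y u)) :
    (OpBJOrth (ContinuousLinearMap.id ℝ X) T ∧ OpBJOrth T (ContinuousLinearMap.id ℝ X)) ∨
      ¬ (∀ A : X →L[ℝ] X, OpBJOrth A T → OpBJOrth T A) := by
  have hM : normAttainingSet T = {x₀, -x₀} := hMT
  obtain ⟨u, hu, hTu, -⟩ := hker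
  have hIT := opBJOrth_id_of_apply_eq_zero hu hTu
  by_cases hc : BJOrth (T x₀) x₀
  · have hx₀ : x₀ ∈ normAttainingSet T := hM ▸ mem_insert _ _
    exact .inl ⟨hIT, opBJOrth_of_bjOrth_apply hx₀ hc⟩
  · exact .inr fun hrs => hc (bjOrth_apply_of_opBJOrth hM (hrs _ hIT))

theorem identity_orth_or_not_right_symmetric {X : Type*} [NormedAddCommGroup X]
    [NormedSpace ℝ X] [FiniteDimensional ℝ X]
    (T : X →L[ℝ] X) (x₀ : X) (hx₀ : ‖x₀‖ = 1)
    (hMT : {x : X | ‖x‖ = 1 ∧ ‖T x‖ = ‖T‖} = {x₀, -x₀})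
    (hker : ∃ u : X, u ≠ 0 ∧ T u = 0 ∧ (∀ y : X, BJOrth u y → BJOrth y u)) :
    (OpBJOrth (ContinuousLinearMap.id ℝ X) T ∧ OpBJOrth T (ContinuousLinearMap.id ℝ X)) ∨
      ¬ (∀ A : X →L[ℝ] X, OpBJOrth A T → OpBJOrth T A) :=
  identity_orth_or_not_right_symmetric_general T x₀ hMT hker
end

section
/- Let X be a two-dimensional strictly convex real Banach space, let x₂ ∈ X be a unit vector, and let z ∈ S_X satisfy z ⊥_B x₂. Then for any c₁, c₂ with c₂ ≠ 0, ‖c₁ z + c₂ x₂‖ = 1 implies |c₁| < 1, and the operator S ∈ B(X) defined on the basis {z, x₂} by Sz = v (v ≠ 0), Sx₂ = 0, extended linearly, attains its norm exactly at ±z. -/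
lemma bj_scaled {X : Type*} [NormedAddCommGroup X] [NormedSpace ℝ X]
    (z x₂ : X) (hz : ‖z‖ = 1) (horth : BJOrth z x₂) (a b : ℝ) :
    |a| ≤ ‖a • z + b • x₂‖ := by
  rcases eq_or_ne a 0 with rfl | ha
  · simp
  · have h := horth (b / a)
    rw [hz] at h
    have heq : a • z + b • x₂ = a • (z + (b / a) • x₂) := by
      rw [smul_add, smul_smul, mul_div_cancel₀ _ ha]
    calc |a| = |a| * 1 := (mul_one _).symm
      _ ≤ |a| * ‖z + (b / a) • x₂‖ := by
          exact mul_le_mul_of_nonneg_left h (abs_nonneg a)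
      _ = ‖a • (z + (b / a) • x₂)‖ := by rw [norm_smul, Real.norm_eq_abs]
      _ = ‖a • z + b • x₂‖ := by rw [heq]

theorem strictly_convex_norm_attainment {X : Type*} [NormedAddCommGroup X]
    [NormedSpace ℝ X] [StrictConvexSpace ℝ X] [FiniteDimensional ℝ X]
    (hdim : Module.finrank ℝ X = 2)
    (z x₂ : X) (hz : ‖z‖ = 1) (hx₂ : ‖x₂‖ = 1) (horth : BJOrth z x₂)
    (S : X →L[ℝ] X) (v : X) (hv : v ≠ 0) (hSz : S z = v) (hSx₂ : S x₂ = 0) :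
    (∀ c₁ c₂ : ℝ, ‖c₁ • z + c₂ • x₂‖ = 1 → c₂ ≠ 0 → |c₁| < 1) ∧
      {x : X | ‖x‖ = 1 ∧ ‖S x‖ = ‖S‖} = {z, -z} := by
  have hx₂ne : x₂ ≠ 0 := by intro h; rw [h, norm_zero] at hx₂; norm_num at hx₂
  -- Part 1
  have part1 : ∀ c₁ c₂ : ℝ, ‖c₁ • z + c₂ • x₂‖ = 1 → c₂ ≠ 0 → |c₁| < 1 := by
    intro c₁ c₂ hnorm hc₂
    have hle : |c₁| ≤ 1 := hnorm ▸ bj_scaled z x₂ hz horth c₁ c₂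
    rcases lt_or_eq_of_le hle with h | h
    · exact h
    · exfalso
      set u := c₁ • z with hu
      set w := c₁ • z + c₂ • x₂ with hw
      have hnu : ‖u‖ = 1 := by rw [hu, norm_smul, Real.norm_eq_abs, h, hz, mul_one]
      have hsum : ‖u + w‖ = ‖u‖ + ‖w‖ := by
        have h2 : u + w = (2 * c₁) • z + c₂ • x₂ := by
          rw [hu, hw]; module
        have hge : 2 ≤ ‖u + w‖ := by
          rw [h2]
          calc (2 : ℝ) = |2 * c₁| := by rw [abs_mul, h]; norm_num
            _ ≤ _ := bj_scaled z x₂ hz horth _ _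
        have hele : ‖u + w‖ ≤ 2 := by
          calc ‖u + w‖ ≤ ‖u‖ + ‖w‖ := norm_add_le _ _
            _ = 2 := by rw [hnu, hw, hnorm]; norm_num
        rw [hnu, hw, hnorm, le_antisymm hele hge]; norm_num
      have := eq_of_norm_eq_of_norm_add_eq (by rw [hnu, hw, hnorm]) hsum
      rw [hu, hw] at this
      have : c₂ • x₂ = 0 := by
        have := this.symm
        rwa [add_eq_left] at this
      exact hc₂ (by simpa [hx₂ne] using this)
  refine ⟨part1, ?_⟩
  -- linear independence and basis
  have hli : LinearIndependent ℝ ![z, x₂] := by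
    rw [LinearIndependent.pair_iff]
    intro s t hst
    have h1 : |s| ≤ 0 := by
      have := bj_scaled z x₂ hz horth s t
      rwa [hst, norm_zero] at this
    have hs : s = 0 := abs_eq_zero.mp (le_antisymm h1 (abs_nonneg s))
    refine ⟨hs, ?_⟩
    rw [hs, zero_smul, zero_add] at hst
    exact (smul_eq_zero.mp hst).resolve_right hx₂ne
  have hcard : Fintype.card (Fin 2) = Module.finrank ℝ X := by simp [hdim]
  let b := basisOfLinearIndependentOfCardEqFinrank hli hcard
  have hb0 : b 0 = z := by simp [b, coe_basisOfLinearIndependentOfCardEqFinrank]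
  have hb1 : b 1 = x₂ := by simp [b, coe_basisOfLinearIndependentOfCardEqFinrank]
  have hrepr : ∀ x : X, x = (b.repr x 0) • z + (b.repr x 1) • x₂ := by
    intro x
    conv_lhs => rw [← b.sum_repr x]
    rw [Fin.sum_univ_two, hb0, hb1]
  -- S on coordinates
  have hSx : ∀ x : X, S x = (b.repr x 0) • v := by
    intro x
    conv_lhs => rw [hrepr x]
    rw [map_add, map_smul, map_smul, hSz, hSx₂, smul_zero, add_zero]
  -- coefficient bound: |repr x 0| ≤ ‖x‖
  have hcoef : ∀ x : X, |b.repr x 0| ≤ ‖x‖ := by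
    intro x
    have := bj_scaled z x₂ hz horth (b.repr x 0) (b.repr x 1)
    rwa [← hrepr x] at this
  -- ‖S‖ = ‖v‖
  have hSnorm : ‖S‖ = ‖v‖ := by
    apply le_antisymm
    · apply ContinuousLinearMap.opNorm_le_bound _ (norm_nonneg v)
      intro x
      rw [hSx x, norm_smul, Real.norm_eq_abs]
      calc |b.repr x 0| * ‖v‖ ≤ ‖x‖ * ‖v‖ :=
            mul_le_mul_of_nonneg_right (hcoef x) (norm_nonneg v)
        _ = ‖v‖ * ‖x‖ := mul_comm _ _
    · calc ‖v‖ = ‖S z‖ := by rw [hSz]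
        _ ≤ ‖S‖ * ‖z‖ := S.le_opNorm z
        _ = ‖S‖ := by rw [hz, mul_one]
  -- set equality
  ext x
  simp only [Set.mem_setOf_eq, Set.mem_insert_iff, Set.mem_singleton_iff]
  constructor
  · rintro ⟨hx1, hxS⟩
    rw [hSx x, norm_smul, Real.norm_eq_abs, hSnorm] at hxS
    have hvpos : (0 : ℝ) < ‖v‖ := norm_pos_iff.mpr hv
    have ha : |b.repr x 0| = 1 := by
      have : |b.repr x 0| * ‖v‖ = 1 * ‖v‖ := by rw [one_mul]; exact hxS
      exact mul_right_cancel₀ hvpos.ne' this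
    have hb1z : b.repr x 1 = 0 := by
      by_contra hne
      have := part1 (b.repr x 0) (b.repr x 1) (by rw [← hrepr x]; exact hx1) hne
      rw [ha] at this; exact lt_irrefl _ this
    have hx : x = (b.repr x 0) • z := by
      conv_lhs => rw [hrepr x]
      rw [hb1z, zero_smul, add_zero]
    rcases abs_eq (by norm_num : (0:ℝ) ≤ 1) |>.mp ha with h | h
    · left; rw [hx, h, one_smul]
    · right; rw [hx, h, neg_one_smul]
  · rintro (rfl | rfl)
    · exact ⟨hz, by rw [hSz, hSnorm]⟩
    · refine ⟨by rw [norm_neg, hz], ?_⟩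
      rw [map_neg, hSz, norm_neg, hSnorm]
end

section
/- Let X be a real strictly convex normed space and x₁, x₂ ∈ S_X with x₁ ⊥_B x₂ and x₂ ⊥_B x₁. Then any unit vector z = α₁x₁ + α₂x₂ satisfies |α₁| ≤ 1 and |α₂| ≤ 1, with strict inequality |α₁| < 1 whenever α₂ ≠ 0 and |α₂| < 1 whenever α₁ ≠ 0. -/
lemma bj_lower {X : Type*} [NormedAddCommGroup X] [NormedSpace ℝ X]
    (x y : X) (hx : ‖x‖ = 1) (h : BJOrth x y) (a b : ℝ) (ha : a ≠ 0) :
    |a| ≤ ‖a • x + b • y‖ := by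
  have : a • x + b • y = a • (x + (b / a) • y) := by
    rw [smul_add, smul_smul, mul_div_cancel₀ _ ha]
  rw [this, norm_smul, Real.norm_eq_abs]
  have := h (b / a)
  nlinarith [abs_nonneg a, norm_nonneg (x + (b / a) • y)]

theorem coeff_bounds_of_mutual_orth {X : Type*} [NormedAddCommGroup X]
    [NormedSpace ℝ X] [StrictConvexSpace ℝ X]
    (x₁ x₂ : X) (hx₁ : ‖x₁‖ = 1) (hx₂ : ‖x₂‖ = 1)
    (h₁₂ : BJOrth x₁ x₂) (h₂₁ : BJOrth x₂ x₁)
    (α₁ α₂ : ℝ) (hz : ‖α₁ • x₁ + α₂ • x₂‖ = 1) :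
    |α₁| ≤ 1 ∧ |α₂| ≤ 1 ∧ (α₂ ≠ 0 → |α₁| < 1) ∧ (α₁ ≠ 0 → |α₂| < 1) := by
  have le₁ : |α₁| ≤ 1 := by
    rcases eq_or_ne α₁ 0 with h | h
    · simp [h]
    · calc |α₁| ≤ ‖α₁ • x₁ + α₂ • x₂‖ := bj_lower x₁ x₂ hx₁ h₁₂ α₁ α₂ h
        _ = 1 := hz
  have le₂ : |α₂| ≤ 1 := by
    rcases eq_or_ne α₂ 0 with h | h
    · simp [h]
    · have := bj_lower x₂ x₁ hx₂ h₂₁ α₂ α₁ h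
      rw [add_comm] at this
      linarith [hz ▸ this]
  refine ⟨le₁, le₂, ?_, ?_⟩
  · intro h2 
    rcases lt_or_eq_of_le le₁ with h | h
    · exact h
    -- |α₁| = 1, α₂ ≠ 0 : contradiction
    exfalso
    have hα₁ : α₁ ≠ 0 := by
      intro h0; rw [h0] at h; simp at h
    have hu : ‖α₁ • x₁‖ = 1 := by
      rw [norm_smul, hx₁, Real.norm_eq_abs, mul_one, h]
    have hne : α₁ • x₁ ≠ α₁ • x₁ + α₂ • x₂ := by
      intro hc
      have : α₂ • x₂ = 0 := by
        have := hc.symm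
        rwa [add_eq_left] at this
      rcases smul_eq_zero.1 this with h' | h'
      · exact h2 h'
      · rw [h'] at hx₂; simp at hx₂
    have hmid : ‖(1 / 2 : ℝ) • (α₁ • x₁ + (α₁ • x₁ + α₂ • x₂))‖ < 1 := by
      have := (norm_midpoint_lt_iff (x := α₁ • x₁) (y := α₁ • x₁ + α₂ • x₂)
        (by rw [hu, hz])).2 hne
      rwa [hu] at this
    have heq : (1 / 2 : ℝ) • (α₁ • x₁ + (α₁ • x₁ + α₂ • x₂)) = α₁ • x₁ + (α₂ / 2) • x₂ := by
      module
    rw [heq] at hmid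
    have := bj_lower x₁ x₂ hx₁ h₁₂ α₁ (α₂ / 2) hα₁
    rw [← h] at hmid
    linarith
  · intro h1
    rcases lt_or_eq_of_le le₂ with h | h
    · exact h
    exfalso
    have hα₂ : α₂ ≠ 0 := by
      intro h0; rw [h0] at h; simp at h
    have hv : ‖α₂ • x₂ + α₁ • x₁‖ = 1 := by rw [add_comm]; exact hz
    have hu : ‖α₂ • x₂‖ = 1 := by
      rw [norm_smul, hx₂, Real.norm_eq_abs, mul_one, h]
    have hne : α₂ • x₂ ≠ α₂ • x₂ + α₁ • x₁ := by
      intro hc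
      have : α₁ • x₁ = 0 := by
        have := hc.symm
        rwa [add_eq_left] at this
      rcases smul_eq_zero.1 this with h' | h'
      · exact h1 h'
      · rw [h'] at hx₁; simp at hx₁
    have hmid : ‖(1 / 2 : ℝ) • (α₂ • x₂ + (α₂ • x₂ + α₁ • x₁))‖ < 1 := by
      have := (norm_midpoint_lt_iff (x := α₂ • x₂) (y := α₂ • x₂ + α₁ • x₁)
        (by rw [hu, hv])).2 hne
      rwa [hu] at this
    have heq : (1 / 2 : ℝ) • (α₂ • x₂ + (α₂ • x₂ + α₁ • x₁)) = α₂ • x₂ + (α₁ / 2) • x₁ := by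
      module
    rw [heq] at hmid
    have := bj_lower x₂ x₁ hx₂ h₂₁ α₂ (α₁ / 2) hα₂
    rw [← h] at hmid
    linarith
end

section
/- Let X be a finite-dimensional real normed space and x ∈ X a nonzero vector. Then there exists a hyperplane H of codimension 1 such that x ⊥_B H, i.e., x ⊥_B h for every h ∈ H. -/
/-! Hahn–Banach gives a functional `f` with `‖f‖ = 1` and `f x = ‖x‖`. It is constant on
`x + ker f`, so `‖x + h‖ ≥ f (x + h) = ‖x‖` for `h ∈ ker f`, and `ker f` is a hyperplane
because `f ≠ 0`. -/

theorem bjOrth_of_mem_ker {X : Type*} [NormedAddCommGroup X] [NormedSpace ℝ X]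
    {f : StrongDual ℝ X} (hf : ‖f‖ ≤ 1) {x h : X} (hfx : f x = ‖x‖) (hh : f h = 0) :
    BJOrth x h := fun lam =>
  calc ‖x‖ = f (x + lam • h) := by simp [hfx, hh]
    _ ≤ ‖f (x + lam • h)‖ := le_abs_self _
    _ ≤ ‖f‖ * ‖x + lam • h‖ := f.le_opNorm _
    _ ≤ ‖x + lam • h‖ := mul_le_of_le_one_left (norm_nonneg _) hf

theorem exists_orthogonal_hyperplane {X : Type*} [NormedAddCommGroup X]
    [NormedSpace ℝ X] [FiniteDimensional ℝ X] (x : X) (hx : x ≠ 0) :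
    ∃ H : Submodule ℝ X, Module.finrank ℝ H = Module.finrank ℝ X - 1 ∧
      ∀ h ∈ H, BJOrth x h := by
  obtain ⟨f, hf, hfx⟩ := exists_dual_vector ℝ x (norm_ne_zero_iff.mpr hx)
  have hf0 : (f : Module.Dual ℝ X) ≠ 0 := fun h0 =>
    hx <| norm_eq_zero.mp <| hfx.symm.trans (LinearMap.congr_fun h0 x)
  refine ⟨LinearMap.ker (f : Module.Dual ℝ X), ?_, fun h hh => bjOrth_of_mem_ker hf.le hfx hh⟩
  have hrank := Module.Dual.finrank_ker_add_one_of_ne_zero hf0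
  omega
end

section
/- Let X be a finite-dimensional real normed space and x, y ∈ X with x ≠ 0. Then there exists a scalar k ∈ ℝ such that (kx + y) ⊥_B x. -/
/-! Take `k` minimizing `t ↦ ‖t • x + y‖`, which is continuous on `ℝ` and tends to infinity
since `x ≠ 0`; minimality at `k` is exactly `k • x + y ⊥_B x`. -/

open Filter

section BirkhoffJames

variable {X : Type*} [NormedAddCommGroup X] [NormedSpace ℝ X]

theorem bjOrth_smul_add_of_forall_norm_le {x y : X} {k : ℝ}
    (hmin : ∀ t : ℝ, ‖k • x + y‖ ≤ ‖t • x + y‖) : BJOrth (k • x + y) x := by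
  intro lam
  have hshift : (k + lam) • x + y = (k • x + y) + lam • x := by
    rw [add_smul]; abel
  simpa [hshift] using hmin (k + lam)

theorem tendsto_norm_smul_add_cocompact {x : X} (hx : x ≠ 0) (y : X) :
    Tendsto (fun t : ℝ => ‖t • x + y‖) (cocompact ℝ) atTop := by
  have hlower : Tendsto (fun t : ℝ => ‖t‖ * ‖x‖ - ‖y‖) (cocompact ℝ) atTop :=
    tendsto_atTop_add_const_right _ _
      (tendsto_norm_cocompact_atTop.atTop_mul_const (norm_pos_iff.mpr hx))
  refine tendsto_atTop_mono (fun t => ?_) hlower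
  have := norm_sub_norm_le (t • x) (-y)
  rwa [sub_neg_eq_add, norm_neg, norm_smul] at this

end BirkhoffJames

theorem exists_orthogonal_combination_general {X : Type*} [NormedAddCommGroup X]
    [NormedSpace ℝ X] (x y : X) (hx : x ≠ 0) :
    ∃ k : ℝ, BJOrth (k • x + y) x := by
  obtain ⟨k, hk⟩ := (show Continuous fun t : ℝ => ‖t • x + y‖ by fun_prop).exists_forall_le
    (tendsto_norm_smul_add_cocompact hx y)
  exact ⟨k, bjOrth_smul_add_of_forall_norm_le hk⟩

theorem exists_orthogonal_combination {X : Type*} [NormedAddCommGroup X]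
    [NormedSpace ℝ X] [FiniteDimensional ℝ X] (x y : X) (hx : x ≠ 0) :
    ∃ k : ℝ, BJOrth (k • x + y) x :=
  exists_orthogonal_combination_general x y hx
end
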